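/- Let G be a connected simple graph on n vertices with diameter at most 2 and maximum vertex degree Δ(G). Then the second smallest distance Laplacian eigenvalue satisfies ∂_{n−1}^L(G) ≤ 2n − 1 − Δ(G). -/

import Mathlib

open Finset Matrix Polynomial

/-- The transmission `Tr(v)` of a vertex `v`: the sum of the distances from `v`
to all other vertices of the graph. -/
noncomputable def transm {n : ℕ} (G : SimpleGraph (Fin n)) (v : Fin n) : ℝ :=
  ∑ u : Fin n, (G.dist v u : ℝ)

/-- The distance Laplacian matrix `D^L(G) = Diag(Tr) - D(G)` of a graph `G`. -/
noncomputable def distLap {n : ℕ} (G : SimpleGraph (Fin n)) : Matrix (Fin n) (Fin n) ℝ :=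
  Matrix.diagonal (transm G) - Matrix.of (fun u v : Fin n => (G.dist u v : ℝ))

/-- `IsDLSpec G μ` says that `μ 0 , μ 1 , …, μ (n-1)` are exactly the eigenvalues
(with multiplicity) of the distance Laplacian matrix of `G`; combined with `Antitone μ`
this means `μ ⟨i-1,_⟩ = ∂_i^L(G)` in the usual decreasing ordering. -/
def IsDLSpec {n : ℕ} (G : SimpleGraph (Fin n)) (μ : Fin n → ℝ) : Prop :=
  (distLap G).charpoly = ∏ i : Fin n, (X - C (μ i))

/-- The Wiener index `W(G) = (1/2) ∑_v Tr(v)`. -/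
noncomputable def wiener {n : ℕ} (G : SimpleGraph (Fin n)) : ℝ :=
  (∑ v : Fin n, transm G v) / 2

/-- The maximum transmission `Tr_max(G) = max_v Tr(v)`. -/
noncomputable def trMax {n : ℕ} (G : SimpleGraph (Fin n)) : ℝ :=
  ⨆ v : Fin n, transm G v

/-! For diameter at most 2 every distance is 0, 1 or 2, so `D(G) = 2(J - I) - A(G)` and
`D^L(G) = 2n I - 2J - L(G)`, with `L(G)` the ordinary Laplacian. On vectors orthogonal to `𝟙` the
quadratic form of `D^L(G)` is thus `2n‖x‖² - xᵀ L(G) x`. At a vertex `v` of maximum degree `Δ`, the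
vector `x = Δ e_v - 𝟙_{N(v)}` is orthogonal to `𝟙`, has `‖x‖² = Δ(Δ + 1)`, and the edges at `v`
alone give `xᵀ L(G) x ≥ Δ(Δ + 1)²`. Hence the form is at most `(2n - 1 - Δ)‖y‖²` on the plane
spanned by `𝟙 ∈ ker D^L(G)` and `x`, and a dimension count against the eigenvectors with
eigenvalue above `2n - 1 - Δ` gives two eigenvalues at most `2n - 1 - Δ`. -/

namespace Matrix.IsHermitian

variable {ι : Type*} [Fintype ι] [DecidableEq ι] {A : Matrix ι ι ℝ} (hA : A.IsHermitian)

theorem dotProduct_mulVec_eq_sum_eigenvalues (x : ι → ℝ) :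
    x ⬝ᵥ (A *ᵥ x) =
      ∑ i, hA.eigenvalues i * (star (hA.eigenvectorUnitary : Matrix ι ι ℝ) *ᵥ x) i ^ 2 := by
  conv_lhs => rw [hA.spectral_theorem, Unitary.conjStarAlgAut_apply]
  rw [← mulVec_mulVec, ← mulVec_mulVec, dotProduct_mulVec, ← mulVec_transpose]
  simp [dotProduct, mulVec_diagonal, sq, mul_left_comm, star_eq_conjTranspose,
    conjTranspose_eq_transpose_of_trivial]

theorem dotProduct_self_eq_sum_sq (x : ι → ℝ) :
    x ⬝ᵥ x = ∑ i, (star (hA.eigenvectorUnitary : Matrix ι ι ℝ) *ᵥ x) i ^ 2 := by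
  have hU := Unitary.mul_star_self_of_mem hA.eigenvectorUnitary.2
  simp only [sq]
  rw [← dotProduct, dotProduct_mulVec, ← mulVec_transpose, mulVec_mulVec]
  simp only [star_eq_conjTranspose, conjTranspose_eq_transpose_of_trivial, transpose_transpose]
    at hU ⊢
  rw [hU, one_mulVec]

theorem finrank_le_card_eigenvalues_le {c : ℝ} (W : Submodule ℝ (ι → ℝ))
    (hW : ∀ x ∈ W, x ⬝ᵥ (A *ᵥ x) ≤ c * (x ⬝ᵥ x)) :
    Module.finrank ℝ W ≤ #{i | hA.eigenvalues i ≤ c} := by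
  set U : Matrix ι ι ℝ := (hA.eigenvectorUnitary : Matrix ι ι ℝ) with hU
  let coord : W →ₗ[ℝ] {i // hA.eigenvalues i ≤ c} → ℝ :=
    LinearMap.funLeft ℝ ℝ Subtype.val ∘ₗ (star U).mulVecLin ∘ₗ W.subtype
  have hinj : Function.Injective coord := by
    rw [← LinearMap.ker_eq_bot, LinearMap.ker_eq_bot']
    rintro ⟨x, hx⟩ hcoord
    have hsmall : ∀ i, hA.eigenvalues i ≤ c → (star U *ᵥ x) i = 0 := fun i hi =>
      congr_fun hcoord ⟨i, hi⟩
    have hterm : ∀ i, 0 ≤ (hA.eigenvalues i - c) * (star U *ᵥ x) i ^ 2 := fun i => by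
      rcases le_or_gt (hA.eigenvalues i) c with hi | hi
      · simp [hsmall i hi]
      · positivity
    have hsum : ∑ i, (hA.eigenvalues i - c) * (star U *ᵥ x) i ^ 2 ≤ 0 := by
      have := hW x hx
      rw [hA.dotProduct_mulVec_eq_sum_eigenvalues, hA.dotProduct_self_eq_sum_sq, mul_sum,
        ← sub_nonpos, ← sum_sub_distrib] at this
      simpa only [sub_mul] using this
    have hzero : star U *ᵥ x = 0 := by
      ext i
      rcases le_or_gt (hA.eigenvalues i) c with hi | hi
      · exact hsmall i hi
      · have := (sum_eq_zero_iff_of_nonneg fun i _ => hterm i).mp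
          (le_antisymm hsum (sum_nonneg fun i _ => hterm i)) i (mem_univ i)
        simpa [(sub_pos.mpr hi).ne'] using this
    have : x ⬝ᵥ x = 0 := by rw [hA.dotProduct_self_eq_sum_sq, ← hU, hzero]; simp
    simpa using dotProduct_self_eq_zero.mp this
  calc Module.finrank ℝ W ≤ Module.finrank ℝ ({i // hA.eigenvalues i ≤ c} → ℝ) :=
        LinearMap.finrank_le_finrank_of_injective hinj
    _ = #{i | hA.eigenvalues i ≤ c} := by simp [Fintype.card_subtype]

theorem card_filter_le_eq_of_charpoly_eq {μ : ι → ℝ} (h : A.charpoly = ∏ i, (X - C (μ i)))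
    (c : ℝ) : #{i | μ i ≤ c} = #{i | hA.eigenvalues i ≤ c} := by
  have hroots : ∀ f : ι → ℝ, (∏ i, (X - C (f i))).roots = univ.val.map f := fun f => by
    simpa [Multiset.map_map] using roots_multiset_prod_X_sub_C (univ.val.map f)
  have hcount : ∀ f : ι → ℝ, #{i | f i ≤ c} = (univ.val.map f).countP (· ≤ c) := fun f => by
    rw [Multiset.countP_map]; rfl
  have hμ : univ.val.map μ = univ.val.map hA.eigenvalues := by
    rw [← hroots, ← hroots, ← h, hA.charpoly_eq]
    rfl
  rw [hcount, hcount, hμ]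

end Matrix.IsHermitian

theorem Antitone.le_of_sub_le_card_filter_le {n : ℕ} {μ : Fin n → ℝ} (hμ : Antitone μ) {c : ℝ}
    {i : Fin n} (h : n - i ≤ #{j | μ j ≤ c}) : μ i ≤ c := by
  by_contra! hi
  have hsub : ({j | μ j ≤ c} : Finset (Fin n)) ⊆ Ioi i := fun j hj => by
    simp only [mem_filter_univ] at hj
    exact mem_Ioi.mpr (lt_of_not_ge fun hji => (hi.trans_le (hμ hji)).not_ge hj)
  have := h.trans (card_le_card hsub)
  rw [Fin.card_Ioi] at this
  omega

section SpanPair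

variable {ι : Type*} [Fintype ι]

theorem finrank_span_pair_eq_two_of_dotProduct_eq_zero {z x : ι → ℝ} (hz : z ≠ 0) (hx : x ≠ 0)
    (hzx : z ⬝ᵥ x = 0) : Module.finrank ℝ (Submodule.span ℝ {z, x}) = 2 := by
  have hli : LinearIndependent ℝ ![z, x] := by
    refine LinearIndependent.pair_iff.mpr fun s t hst => ?_
    have hs : s * (z ⬝ᵥ z) = 0 := by
      simpa [dotProduct_add, dotProduct_smul, hzx] using congr_arg (z ⬝ᵥ ·) hst
    obtain rfl : s = 0 := by simpa [hz] using hs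
    simpa [hx] using hst
  rw [← range_cons_cons_empty z x ![], finrank_span_eq_card hli, Fintype.card_fin]

theorem Matrix.IsSymm.dotProduct_mulVec_le_of_mem_span_pair {A : Matrix ι ι ℝ}
    (hA : A.IsSymm) {z x : ι → ℝ} {c : ℝ} (hz : A *ᵥ z = 0) (hzx : z ⬝ᵥ x = 0) (hc : 0 ≤ c)
    (hx : x ⬝ᵥ (A *ᵥ x) ≤ c * (x ⬝ᵥ x)) :
    ∀ y ∈ Submodule.span ℝ {z, x}, y ⬝ᵥ (A *ᵥ y) ≤ c * (y ⬝ᵥ y) := by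
  intro y hy
  obtain ⟨a, b, rfl⟩ := Submodule.mem_span_pair.mp hy
  have hzAx : z ⬝ᵥ (A *ᵥ x) = 0 := by
    rw [dotProduct_mulVec, ← mulVec_transpose, hA.eq, hz, zero_dotProduct]
  have hquad : (a • z + b • x) ⬝ᵥ (A *ᵥ (a • z + b • x)) = b ^ 2 * (x ⬝ᵥ (A *ᵥ x)) := by
    simp only [mulVec_add, mulVec_smul, hz, smul_zero, zero_add, dotProduct_smul, add_dotProduct,
      smul_dotProduct, hzAx, smul_eq_mul, mul_zero]
    ring
  have hnorm : (a • z + b • x) ⬝ᵥ (a • z + b • x) = a ^ 2 * (z ⬝ᵥ z) + b ^ 2 * (x ⬝ᵥ x) := by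
    simp only [dotProduct_add, dotProduct_smul, add_dotProduct, smul_dotProduct, smul_eq_mul,
      dotProduct_comm x z, hzx, mul_zero, add_zero, zero_add]
    ring
  have hzz : 0 ≤ z ⬝ᵥ z := dotProduct_self_star_nonneg z
  rw [hquad, hnorm]
  nlinarith [mul_le_mul_of_nonneg_left hx (sq_nonneg b),
    mul_nonneg hc (mul_nonneg (sq_nonneg a) hzz)]

end SpanPair

namespace SimpleGraph

variable {V : Type*} [Fintype V]

theorem dist_eq_two_of_diam_le_two {G : SimpleGraph V} (hG : G.Connected) (hd : G.diam ≤ 2)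
    {u w : V} (hne : u ≠ w) (hnadj : ¬G.Adj u w) : G.dist u w = 2 := by
  have : Nonempty V := hG.nonempty
  have hle : G.dist u w ≤ 2 :=
    (G.dist_le_diam (G.connected_iff_ediam_ne_top.mp hG)).trans hd
  have hpos : 0 < G.dist u w := hG.pos_dist_of_ne hne
  have hne1 : G.dist u w ≠ 1 := fun h => hnadj (dist_eq_one_iff_adj.mp h)
  omega

variable [DecidableEq V] (G : SimpleGraph V) [DecidableRel G.Adj]

theorem sum_neighborFinset_sq_le_dotProduct_lapMatrix_mulVec (x : V → ℝ) (v : V) :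
    ∑ u ∈ G.neighborFinset v, (x v - x u) ^ 2 ≤ x ⬝ᵥ (G.lapMatrix ℝ *ᵥ x) := by
  set f : V → V → ℝ := fun i j => if G.Adj i j then (x i - x j) ^ 2 else 0
  have hrow : ∑ j, f v j = ∑ u ∈ G.neighborFinset v, (x v - x u) ^ 2 := by
    simp [f, neighborFinset_eq_filter, sum_filter]
  have hcol : ∑ i ∈ univ.erase v, f i v = ∑ u ∈ G.neighborFinset v, (x v - x u) ^ 2 := by
    rw [← hrow, ← add_sum_erase _ _ (mem_univ v)]
    simp only [f, G.irrefl, if_false, zero_add, adj_comm]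
    refine sum_congr rfl fun i _ => ?_
    split_ifs <;> ring
  rw [← toLinearMap₂'_apply', G.lapMatrix_toLinearMap₂' ℝ x, le_div_iff₀ two_pos]
  calc (∑ u ∈ G.neighborFinset v, (x v - x u) ^ 2) * 2
      = ∑ j, f v j + ∑ i ∈ univ.erase v, f i v := by rw [hrow, hcol]; ring
    _ ≤ ∑ j, f v j + ∑ i ∈ univ.erase v, ∑ j, f i j := by
        gcongr with i
        exact single_le_sum (fun j _ => by dsimp [f]; split_ifs <;> positivity) (mem_univ v)
    _ = ∑ i, ∑ j, f i j := add_sum_erase _ (fun i => ∑ j, f i j) (mem_univ v)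

def starVector (v : V) : V → ℝ := (G.degree v : ℝ) • Pi.single v 1 - G.adjMatrix ℝ v

theorem one_dotProduct_starVector (v : V) : 1 ⬝ᵥ G.starVector v = 0 := by
  simp [starVector, dotProduct_sub]

theorem starVector_apply_self (v : V) : G.starVector v v = G.degree v := by
  simp [starVector]

theorem starVector_dotProduct_self (v : V) :
    G.starVector v ⬝ᵥ G.starVector v = G.degree v * (G.degree v + 1) := by
  have hdeg : G.adjMatrix ℝ v ⬝ᵥ G.adjMatrix ℝ v = G.degree v := by
    simpa [dotProduct, mul_apply, adj_comm] using G.adjMatrix_mul_self_apply_self (α := ℝ) v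
  conv_lhs => enter [2]; rw [starVector]
  rw [dotProduct_sub, dotProduct_smul, dotProduct_single, mul_one, starVector_apply_self,
    starVector, sub_dotProduct, smul_dotProduct, single_dotProduct, hdeg]
  simp only [adjMatrix_apply, G.irrefl, if_false, one_mul, smul_eq_mul]
  ring

theorem le_starVector_dotProduct_lapMatrix_mulVec (v : V) :
    G.degree v * (G.degree v + 1) ^ 2 ≤ G.starVector v ⬝ᵥ (G.lapMatrix ℝ *ᵥ G.starVector v) := by
  refine le_trans (le_of_eq ?_) (G.sum_neighborFinset_sq_le_dotProduct_lapMatrix_mulVec _ v)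
  rw [sum_congr rfl fun u hu => ?_, sum_const, card_neighborFinset_eq_degree, nsmul_eq_mul]
  have hne : u ≠ v := (G.ne_of_adj ((G.mem_neighborFinset v u).mp hu)).symm
  simp [starVector, hne, (G.mem_neighborFinset v u).mp hu]

variable {G} in
theorem Connected.min_two_card_le_finrank_span_one_starVector (hG : G.Connected) (v : V) :
    min 2 (Fintype.card V) ≤ Module.finrank ℝ (Submodule.span ℝ {1, G.starVector v}) := by
  have : Nonempty V := hG.nonempty
  rcases lt_or_ge (Fintype.card V) 2 with hV | hV
  · have hne : Submodule.span ℝ {1, G.starVector v} ≠ ⊥ :=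
      (Submodule.ne_bot_iff _).mpr ⟨1, Submodule.subset_span (by simp), one_ne_zero⟩
    have := Submodule.one_le_finrank_iff.mpr hne
    omega
  · have : Nontrivial V := Fintype.one_lt_card_iff_nontrivial.mp hV
    have hx : G.starVector v ≠ 0 := fun h => by
      have := G.starVector_apply_self v
      rw [h, Pi.zero_apply, eq_comm, Nat.cast_eq_zero] at this
      exact (hG.preconnected.degree_pos_of_nontrivial v).ne' this
    rw [finrank_span_pair_eq_two_of_dotProduct_eq_zero one_ne_zero hx
      (G.one_dotProduct_starVector v)]
    omega

end SimpleGraph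

open SimpleGraph

theorem distLap_isSymm {n : ℕ} (G : SimpleGraph (Fin n)) : (distLap G).IsSymm := by
  ext u w
  by_cases h : u = w
  · subst h; simp
  · simp [distLap, diagonal_apply_ne _ h, diagonal_apply_ne _ (Ne.symm h), dist_comm]

theorem distLap_mulVec_one {n : ℕ} (G : SimpleGraph (Fin n)) : distLap G *ᵥ 1 = 0 := by
  ext u
  rw [distLap, sub_mulVec, Pi.sub_apply, mulVec_diagonal]
  simp [mulVec, dotProduct, transm]

section DiamLeTwo

variable {n : ℕ} {G : SimpleGraph (Fin n)} [DecidableRel G.Adj] (hG : G.Connected)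
  (hd : G.diam ≤ 2)
include hG hd

theorem distMatrix_eq_of_diam_le_two :
    of (fun u w => (G.dist u w : ℝ)) = (2 : ℝ) • (of 1 - 1) - G.adjMatrix ℝ := by
  ext u w
  by_cases hne : u = w
  · simp [hne]
  by_cases hadj : G.Adj u w
  · norm_num [hne, hadj, dist_eq_one_iff_adj.mpr hadj, one_apply]
  · simp [hne, hadj, dist_eq_two_of_diam_le_two hG hd hne hadj, one_apply]

theorem transm_eq_of_diam_le_two (u : Fin n) : transm G u = 2 * (n - 1) - G.degree u := by
  have : transm G u = (of (fun u w => (G.dist u w : ℝ)) *ᵥ 1) u := by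
    simp [transm, mulVec, dotProduct]
  rw [this, distMatrix_eq_of_diam_le_two hG hd, sub_mulVec, smul_mulVec, sub_mulVec, one_mulVec]
  simp [mulVec, dotProduct, ← card_neighborFinset_eq_degree, neighborFinset_eq_filter]

theorem distLap_eq_of_diam_le_two :
    distLap G = (2 * n : ℝ) • 1 - (2 : ℝ) • of 1 - G.lapMatrix ℝ := by
  have hdiag : diagonal (transm G) = (2 * (n - 1) : ℝ) • 1 - G.degMatrix ℝ := by
    rw [degMatrix, ← diagonal_one', ← diagonal_smul, diagonal_sub]
    congr 1
    ext u
    simp [transm_eq_of_diam_le_two hG hd u]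
  rw [distLap, hdiag, distMatrix_eq_of_diam_le_two hG hd, lapMatrix]
  module

theorem dotProduct_distLap_mulVec_of_diam_le_two {x : Fin n → ℝ} (hx : 1 ⬝ᵥ x = 0) :
    x ⬝ᵥ (distLap G *ᵥ x) = 2 * n * (x ⬝ᵥ x) - x ⬝ᵥ (G.lapMatrix ℝ *ᵥ x) := by
  have hJ : (of 1 : Matrix (Fin n) (Fin n) ℝ) *ᵥ x = 0 := by
    ext u
    simpa [mulVec, dotProduct, one_dotProduct] using hx
  rw [distLap_eq_of_diam_le_two hG hd, sub_mulVec, sub_mulVec, smul_mulVec, smul_mulVec, hJ,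
    one_mulVec]
  simp [dotProduct_sub, dotProduct_smul]

theorem starVector_dotProduct_distLap_mulVec_le (v : Fin n) :
    G.starVector v ⬝ᵥ (distLap G *ᵥ G.starVector v) ≤
      (2 * n - 1 - G.degree v) * (G.starVector v ⬝ᵥ G.starVector v) := by
  rw [dotProduct_distLap_mulVec_of_diam_le_two hG hd (G.one_dotProduct_starVector v),
    G.starVector_dotProduct_self]
  linear_combination G.le_starVector_dotProduct_lapMatrix_mulVec v

end DiamLeTwo

theorem distLap_second_smallest_le (n : ℕ) (G : SimpleGraph (Fin n))
    [DecidableRel G.Adj] (hG : G.Connected) (hd : G.diam ≤ 2)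
    (μ : Fin n → ℝ) (hμ : IsDLSpec G μ) (hmono : Antitone μ) :
    μ ⟨n - 2, by have h0 : 0 < n := Fin.pos_iff_nonempty.mpr hG.nonempty; omega⟩ ≤ 2 * (n : ℝ) - 1 - (G.maxDegree : ℝ) := by
  have : Nonempty (Fin n) := hG.nonempty
  obtain ⟨v, hv⟩ := G.exists_maximal_degree_vertex
  have hc : 0 ≤ 2 * (n : ℝ) - 1 - G.maxDegree := by
    have : G.maxDegree < n := by simpa using G.maxDegree_lt_card_verts
    have : (G.maxDegree : ℝ) + 1 ≤ n := by exact_mod_cast this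
    linarith
  have hW := (distLap_isSymm G).dotProduct_mulVec_le_of_mem_span_pair (distLap_mulVec_one G)
    (G.one_dotProduct_starVector v) hc
    (hv ▸ starVector_dotProduct_distLap_mulVec_le hG hd v)
  have hherm : (distLap G).IsHermitian := isHermitian_iff_isSymm.mpr (distLap_isSymm G)
  refine hmono.le_of_sub_le_card_filter_le ?_
  rw [hherm.card_filter_le_eq_of_charpoly_eq hμ]
  calc n - (n - 2) = min 2 (Fintype.card (Fin n)) := by rw [Fintype.card_fin]; omega
    _ ≤ _ := hG.min_two_card_le_finrank_span_one_starVector v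
    _ ≤ _ := hherm.finrank_le_card_eigenvalues_le _ hW
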